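/- Let W be a well-order and let G_W = Wr_{λ∈W^op} H_λ where every H_λ is the alternating group A₅. Then the set of nontrivial normal subgroups of G_W (including G_W itself), partially ordered by inclusion, is order-isomorphic to W^op. -/

import Mathlib

/-!
Put `Λ = Wᵒᵈ`, in which every nonempty set has a greatest element, and write `D_Γ` for the
elements of `G = Wr_{λ ∈ Λ} H_λ` moving only coordinates in `Γ`; each `H_λ = A₅` is simple and
perfect.

Every element `g` of `G` is triangular: it multiplies the `l`-th coordinate of `x` by a factor
`cocycle g l x ∈ H_l` depending only on the coordinates of `x` above `l`; it moves finitely many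
coordinates, and at each of them only finitely many of these factors are nontrivial. Peeling them
off shows that `D_Γ` is generated by the permutations `ζ_{l,t}(h)`, `l ∈ Γ`, which multiply the
`l`-th coordinate by `h` on the configurations agreeing with `t` above `l`. Each `D_{≤ w}` is
normal, and `w ↦ D_{≤ w}` is an order embedding.

Conversely, let `N ≠ 1` be normal and `l₀` the largest coordinate moved by `N`, so that
`N ≤ D_{≤ l₀}`. At a fixed `x`, the factors at level `l₀` of the elements of `N` form a normal
subgroup of the simple group `H_{l₀}`, nontrivial because elements acting above `l₀` carry any
configuration to any other one there; so `N` realises every factor. Two elements supported on the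
slab of configurations agreeing with `t` from `l₀` on then have their commutator in `N`:
conjugation by elements of `N` moves them to disjoint slabs. As every `H_l` is perfect, `N`
contains each `ζ_{l,t}(h)` with `l < l₀`, i.e. `D_{< l₀} ≤ N`. Finally, if `p ∈ N` has factor `a`
on the slab of `t`, then `⁅p, ζ_{l₀,t}(b)⁆ ∈ N` agrees with `ζ_{l₀,t}(⁅a, b⁆)` modulo `D_{< l₀}`,
and simplicity of `H_{l₀}` puts every `ζ_{l₀,t}(h)` into `N`. Hence `N = D_{≤ l₀}`.
-/

open scoped Classical

noncomputable section

namespace GW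

/-- The support of an element of a dependent product of groups. -/
def supp {Λ : Type*} {H : Λ → Type*} [∀ l, One (H l)] (x : ∀ l, H l) : Set Λ :=
  {l | x l ≠ 1}

/-- The restricted direct product: functions with finite support. -/
abbrev S (Λ : Type*) (H : Λ → Type*) [∀ l, One (H l)] : Type _ :=
  {x : ∀ l, H l // (supp x).Finite}

variable {Λ : Type*} [PartialOrder Λ] (H : Λ → Type*) [∀ l, Group (H l)]

/-- The underlying function of the permutation `ξ_h`. -/
def xiFun (l : Λ) (h : H l) (x : ∀ m, H m) : ∀ m, H m :=
  Function.update x l (if ∀ n, l < n → x n = 1 then h * x l else x l)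

lemma xiFun_apply_ne (l : Λ) (h : H l) (x : ∀ m, H m) {m : Λ} (hm : m ≠ l) :
    xiFun H l h x m = x m := Function.update_of_ne hm _ x

lemma xiFun_support (l : Λ) (h : H l) (x : ∀ m, H m) :
    supp (xiFun H l h x) ⊆ insert l (supp x) := by
  intro m hm
  rcases eq_or_ne m l with rfl | hne
  · exact Set.mem_insert _ _
  · refine Set.mem_insert_of_mem _ ?_
    have : xiFun H l h x m ≠ 1 := hm
    rwa [xiFun_apply_ne H l h x hne] at this

lemma xiFun_cond (l : Λ) (h : H l) (x : ∀ m, H m) :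
    (∀ n, l < n → xiFun H l h x n = 1) ↔ ∀ n, l < n → x n = 1 := by
  constructor
  · intro hc n hn
    have := hc n hn
    rwa [xiFun_apply_ne H l h x hn.ne'] at this
  · intro hc n hn
    rw [xiFun_apply_ne H l h x hn.ne']
    exact hc n hn

lemma xiFun_inv (l : Λ) (h : H l) (x : ∀ m, H m) :
    xiFun H l h⁻¹ (xiFun H l h x) = x := by
  funext m
  rcases eq_or_ne m l with rfl | hne
  · have hyl : xiFun H m h x m = if ∀ n, m < n → x n = 1 then h * x m else x m := by
      simp [xiFun]
    show Function.update (xiFun H m h x) m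
      (if ∀ n, m < n → xiFun H m h x n = 1 then h⁻¹ * xiFun H m h x m
        else xiFun H m h x m) m = x m
    rw [Function.update_self]
    by_cases hc : ∀ n, m < n → x n = 1
    · rw [if_pos ((xiFun_cond H m h x).2 hc), hyl, if_pos hc, inv_mul_cancel_left]
    · rw [if_neg (fun hcy => hc ((xiFun_cond H m h x).1 hcy)), hyl, if_neg hc]
  · rw [xiFun_apply_ne H l h⁻¹ _ hne, xiFun_apply_ne H l h x hne]

/-- The permutation `ξ_h` of the restricted product `S`. -/
def xi (l : Λ) (h : H l) : Equiv.Perm (S Λ H) where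
  toFun x := ⟨xiFun H l h x.1, (x.2.insert l).subset (xiFun_support H l h x.1)⟩
  invFun x := ⟨xiFun H l h⁻¹ x.1, (x.2.insert l).subset (xiFun_support H l h⁻¹ x.1)⟩
  left_inv x := Subtype.ext (xiFun_inv H l h x.1)
  right_inv x := Subtype.ext (by simpa using xiFun_inv H l h⁻¹ x.1)

/-- The generalized wreath product `Wr_{λ∈Λ} H_λ` as a subgroup of `Perm S`. -/
def Wr (Λ : Type*) [PartialOrder Λ] (H : Λ → Type*) [∀ l, Group (H l)] :
    Subgroup (Equiv.Perm (S Λ H)) :=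
  Subgroup.closure {e | ∃ (l : Λ) (h : H l), e = xi H l h}

/-- For `Γ ⊆ Λ`, the subgroup `H_Γ` of `Perm S` generated by the `ξ_h` with `h ∈ H_γ`, `γ ∈ Γ`. -/
def HSub (Γ : Set Λ) : Subgroup (Equiv.Perm (S Λ H)) :=
  Subgroup.closure {e | ∃ (l : Λ) (h : H l), l ∈ Γ ∧ e = xi H l h}

/-- For `Γ ⊆ Λ`, the subgroup `D_Γ` of `H_Λ` of elements fixing all coordinates outside `Γ`. -/
def D (Γ : Set Λ) : Subgroup ↥(Wr Λ H) where
  carrier := {g | ∀ (x : S Λ H) (l : Λ), l ∉ Γ → ((g : Equiv.Perm (S Λ H)) x).1 l = x.1 l}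
  one_mem' := fun _ _ _ => rfl
  mul_mem' := by
    intro a b ha hb x l hl
    have h1 := ha ((b : Equiv.Perm (S Λ H)) x) l hl
    have h2 := hb x l hl
    simpa [h2] using h1
  inv_mem' := by
    intro a ha x l hl
    have := ha (((a : Equiv.Perm (S Λ H)))⁻¹ x) l hl
    simpa using this.symm

end GW

end

noncomputable section

namespace GW

open Equiv
open scoped commutatorElement

section Group

variable {G : Type*} [Group G]

theorem commutatorElement_mul_mul_of_commute {q u r v : G} (hur : Commute u r)
    (huv : Commute u v) (hvq : Commute v q) : ⁅q * u, r * v⁆ = ⁅q, r⁆ := by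
  simp only [commutatorElement_def, mul_inv_rev, mul_assoc]
  rw [← mul_assoc u r, hur.eq, mul_assoc r u, ← mul_assoc u v, huv.eq, mul_assoc v u,
    mul_inv_cancel_left, ← mul_assoc v q⁻¹, hvq.inv_right.eq, mul_assoc q⁻¹ v,
    mul_inv_cancel_left]

theorem commutatorElement_mem_right {N : Subgroup G} (hN : N.Normal) (g : G) {n : G}
    (hn : n ∈ N) : ⁅g, n⁆ ∈ N := by
  rw [commutatorElement_def]
  exact N.mul_mem (hN.conj_mem n hn g) (N.inv_mem hn)

theorem commutatorElement_mem_left {N : Subgroup G} (hN : N.Normal) {n : G} (hn : n ∈ N)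
    (g : G) : ⁅n, g⁆ ∈ N := by
  rw [← commutatorElement_inv]
  exact N.inv_mem (commutatorElement_mem_right hN g hn)

variable (G) in
theorem exists_not_commute [Nontrivial G] [Group.IsPerfect G] : ∃ a b : G, ¬ Commute a b := by
  by_contra h
  push Not at h
  exact Group.IsPerfect.not_isMulCommutative G ⟨⟨fun a b => (h a b).eq⟩⟩

end Group

def IsSupportedIn {α : Type*} (g : Perm α) (A : Set α) : Prop := ∀ x ∉ A, g x = x

namespace IsSupportedIn

variable {α : Type*} {g p : Perm α} {A B : Set α}

theorem inv (hg : IsSupportedIn g A) : IsSupportedIn g⁻¹ A :=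
  fun x hx => by rw [Perm.inv_eq_iff_eq, hg x hx]

theorem conj (hg : IsSupportedIn g A) (hp : Set.MapsTo p A B) :
    IsSupportedIn (p * g * p⁻¹) B := by
  intro x hx
  have : p⁻¹ x ∉ A := fun h => hx (by simpa using hp h)
  rw [Perm.mul_apply, Perm.mul_apply, hg _ this]
  exact p.apply_symm_apply x

theorem commute {g' : Perm α} (hg : IsSupportedIn g A) (hg' : IsSupportedIn g' B)
    (hAB : Disjoint A B) : Commute g g' :=
  Perm.Disjoint.commute fun x => by
    by_cases hx : x ∈ A
    · exact Or.inr (hg' x (Set.disjoint_left.1 hAB hx))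
    · exact Or.inl (hg x hx)

end IsSupportedIn

variable {Λ : Type*} {H : Λ → Type*}

section AgreeAbove

variable [PartialOrder Λ]

def AgreeAbove (l : Λ) (x y : ∀ m, H m) : Prop := ∀ m, l < m → x m = y m

namespace AgreeAbove

variable {l : Λ} {x y z : ∀ m, H m}

theorem refl (l : Λ) (x : ∀ m, H m) : AgreeAbove l x x := fun _ _ => rfl

theorem symm (h : AgreeAbove l x y) : AgreeAbove l y x := fun m hm => (h m hm).symm

theorem trans (h : AgreeAbove l x y) (h' : AgreeAbove l y z) : AgreeAbove l x z :=
  fun m hm => (h m hm).trans (h' m hm)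

theorem mono {l' : Λ} (h : AgreeAbove l x y) (hl : l ≤ l') : AgreeAbove l' x y :=
  fun m hm => h m (hl.trans_lt hm)

theorem congr_left (h : AgreeAbove l x y) : AgreeAbove l x z ↔ AgreeAbove l y z :=
  ⟨h.symm.trans, h.trans⟩

theorem congr_right (h : AgreeAbove l y z) : AgreeAbove l x y ↔ AgreeAbove l x z :=
  ⟨(·.trans h), (·.trans h.symm)⟩

end AgreeAbove

end AgreeAbove

variable [∀ l, Group (H l)]

def cocycle (g : Perm (S Λ H)) (l : Λ) (x : S Λ H) : H l := (g x).1 l * (x.1 l)⁻¹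

section cocycle

variable {g g' : Perm (S Λ H)} {l : Λ} {x : S Λ H}

theorem apply_eq_cocycle_mul : (g x).1 l = cocycle g l x * x.1 l := by simp [cocycle]

theorem cocycle_one : cocycle 1 l x = 1 := by simp [cocycle]

theorem cocycle_eq_one_iff : cocycle g l x = 1 ↔ (g x).1 l = x.1 l := mul_inv_eq_one

theorem cocycle_mul : cocycle (g * g') l x = cocycle g l (g' x) * cocycle g' l x := by
  simp [cocycle, mul_assoc]

end cocycle

section PartialOrder

variable [PartialOrder Λ]

/-- `ζ_{l,t}(h)` on the full product; `ξ_h` is the case `t = 1`. -/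
def zetaFun (l : Λ) (t : ∀ m, H m) (h : H l) (x : ∀ m, H m) : ∀ m, H m :=
  Function.update x l (if AgreeAbove l x t then h * x l else x l)

section zetaFun

variable {l u : Λ} {s t x : ∀ m, H m} {h h' : H l}

theorem zetaFun_apply_of_ne {m : Λ} (hm : m ≠ l) : zetaFun l t h x m = x m :=
  Function.update_of_ne hm _ x

theorem zetaFun_apply_self : zetaFun l t h x l = if AgreeAbove l x t then h * x l else x l :=
  Function.update_self _ _ _

theorem zetaFun_of_not_agreeAbove (hx : ¬ AgreeAbove l x t) : zetaFun l t h x = x := by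
  rw [zetaFun, if_neg hx, Function.update_eq_self]

theorem agreeAbove_zetaFun_of_not_lt (hul : ¬ u < l) : AgreeAbove u (zetaFun l t h x) x :=
  fun _ hm => zetaFun_apply_of_ne fun he => hul (he ▸ hm)

theorem agreeAbove_zetaFun_iff (l : Λ) {k : H u} (y : ∀ m, H m) :
    AgreeAbove l (zetaFun u s k x) (zetaFun u s k y) ↔ AgreeAbove l x y := by
  by_cases hlu : l < u
  · constructor
    · intro hxy m hm
      have hm' := hxy m hm
      rcases eq_or_ne m u with rfl | hmu
      · have habove : AgreeAbove m x y := fun n hn => by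
          simpa only [zetaFun_apply_of_ne (ne_of_gt hn)] using hxy n (hm.trans hn)
        simp only [zetaFun_apply_self, habove.congr_left] at hm'
        split_ifs at hm'
        exacts [mul_left_cancel hm', hm']
      · simpa only [zetaFun_apply_of_ne hmu] using hm'
    · intro hxy m hm
      rcases eq_or_ne m u with rfl | hmu
      · simp only [zetaFun_apply_self, (hxy.mono hlu.le).congr_left, hxy m hm]
      · simp only [zetaFun_apply_of_ne hmu, hxy m hm]
  · rw [(agreeAbove_zetaFun_of_not_lt hlu).congr_left,
      (agreeAbove_zetaFun_of_not_lt hlu).congr_right]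

theorem zetaFun_one : zetaFun l t 1 x = x := by
  funext m
  rcases eq_or_ne m l with rfl | hm
  · simp [zetaFun_apply_self]
  · exact zetaFun_apply_of_ne hm

theorem zetaFun_mul : zetaFun l t h (zetaFun l t h' x) = zetaFun l t (h * h') x := by
  funext m
  rcases eq_or_ne m l with rfl | hm
  · simp only [zetaFun_apply_self, (agreeAbove_zetaFun_of_not_lt (lt_irrefl m)).congr_left]
    split_ifs <;> simp [mul_assoc]
  · simp only [zetaFun_apply_of_ne hm]

theorem zetaFun_congr {t' : ∀ m, H m} (htt' : AgreeAbove l t t') :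
    zetaFun l t h x = zetaFun l t' h x := by
  simp only [zetaFun, htt'.congr_right]

theorem zetaFun_comm (hlu : l < u) (k : H u) :
    zetaFun u s k (zetaFun l t h x) = zetaFun l (zetaFun u s k t) h (zetaFun u s k x) := by
  funext m
  rcases eq_or_ne m u with rfl | hmu
  · rw [zetaFun_apply_of_ne hlu.ne', zetaFun_apply_self, zetaFun_apply_self,
      (agreeAbove_zetaFun_of_not_lt hlu.asymm).congr_left, zetaFun_apply_of_ne hlu.ne']
  rcases eq_or_ne m l with rfl | hml
  · rw [zetaFun_apply_of_ne hmu, zetaFun_apply_self, zetaFun_apply_self,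
      agreeAbove_zetaFun_iff, zetaFun_apply_of_ne hmu]
  · simp only [zetaFun_apply_of_ne hmu, zetaFun_apply_of_ne hml]

theorem supp_zetaFun_subset : supp (zetaFun l t h x) ⊆ insert l (supp x) := by
  intro m hm
  rcases eq_or_ne m l with rfl | hne
  · exact Set.mem_insert _ _
  · exact Set.mem_insert_of_mem _ fun hx => hm (by rw [zetaFun_apply_of_ne hne]; exact hx)

end zetaFun

def zeta (l : Λ) (t : ∀ m, H m) : H l →* Perm (S Λ H) where
  toFun h :=
    { toFun := fun x => ⟨zetaFun l t h x.1, (x.2.insert l).subset supp_zetaFun_subset⟩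
      invFun := fun x => ⟨zetaFun l t h⁻¹ x.1, (x.2.insert l).subset supp_zetaFun_subset⟩
      left_inv := fun x => Subtype.ext (by simp only [zetaFun_mul, inv_mul_cancel, zetaFun_one])
      right_inv := fun x => Subtype.ext (by simp only [zetaFun_mul, mul_inv_cancel, zetaFun_one]) }
  map_one' := Equiv.ext fun _ => Subtype.ext zetaFun_one
  map_mul' _ _ := Equiv.ext fun _ => Subtype.ext zetaFun_mul.symm

section zeta

variable {l u : Λ} {t : ∀ m, H m} {h : H l}

@[simp]
theorem zeta_apply_val (x : S Λ H) : (zeta l t h x).1 = zetaFun l t h x.1 := rfl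

theorem xi_eq_zeta (l : Λ) (h : H l) : xi H l h = zeta l 1 h := rfl

theorem zeta_congr {t' : ∀ m, H m} (htt' : AgreeAbove l t t') : zeta l t = zeta l t' :=
  MonoidHom.ext fun _ => Equiv.ext fun _ => Subtype.ext (zetaFun_congr htt')

theorem zeta_conj (hlu : l < u) (s : ∀ m, H m) (k : H u) :
    zeta u s k * zeta l t h * (zeta u s k)⁻¹ = zeta l (zetaFun u s k t) h := by
  rw [mul_inv_eq_iff_eq_mul]
  exact Equiv.ext fun x => Subtype.ext (zetaFun_comm hlu k)

theorem cocycle_zeta_self (x : S Λ H) :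
    cocycle (zeta l t h) l x = if AgreeAbove l x.1 t then h else 1 := by
  simp only [cocycle, zeta_apply_val, zetaFun_apply_self]
  split_ifs <;> simp

theorem cocycle_zeta_of_ne {l' : Λ} (hl : l' ≠ l) (x : S Λ H) : cocycle (zeta l t h) l' x = 1 := by
  simp [cocycle, zetaFun_apply_of_ne hl]

end zeta

theorem zeta_mem_Wr_of_forall_mem (F : Finset Λ) :
    ∀ (l : Λ) (t : ∀ m, H m) (h : H l), (∀ m, l < m → t m ≠ 1 → m ∈ F) →
      zeta l t h ∈ Wr Λ H := by
  induction F using Finset.induction_on with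
  | empty =>
    intro l t h ht
    rw [zeta_congr (t' := 1) fun m hm => not_not.1 fun hne => by simpa using ht m hm hne,
      ← xi_eq_zeta]
    exact Subgroup.subset_closure ⟨l, h, rfl⟩
  | insert u F _ ih =>
    intro l t h ht
    by_cases hlu : l < u
    · -- `ζ_{l,t}` is the conjugate of `ζ_{l,t₂}` by `ζ_{u,t}(t u)`, where `t₂` is trivial at `u`
      set t₂ := zetaFun u t (t u)⁻¹ t
      have ht₂ : zeta l t₂ h ∈ Wr Λ H := by
        refine ih l t₂ h fun m hm hne => ?_
        rcases eq_or_ne m u with rfl | hmu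
        · simp [t₂, zetaFun_apply_self, AgreeAbove.refl] at hne
        · rw [show t₂ m = t m from zetaFun_apply_of_ne hmu] at hne
          exact (Finset.mem_insert.1 (ht m hm hne)).resolve_left hmu
      have htu : zeta u t (t u) ∈ Wr Λ H :=
        ih u t (t u) fun m hm hne =>
          (Finset.mem_insert.1 (ht m (hlu.trans hm) hne)).resolve_left hm.ne'
      have hconj := zeta_conj (t := t₂) (h := h) hlu t (t u)
      rw [zetaFun_mul, mul_inv_cancel, zetaFun_one] at hconj
      rw [← hconj]
      exact mul_mem (mul_mem htu ht₂) (inv_mem htu)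
    · exact ih l t h fun m hm hne =>
        (Finset.mem_insert.1 (ht m hm hne)).resolve_left fun hmu => hlu (hmu ▸ hm)

theorem zeta_mem_Wr (l : Λ) (t : S Λ H) (h : H l) : zeta l t.1 h ∈ Wr Λ H :=
  zeta_mem_Wr_of_forall_mem t.2.toFinset l t.1 h fun _ _ hne => t.2.mem_toFinset.2 hne

def zetaWr (l : Λ) (t : S Λ H) : H l →* Wr Λ H :=
  (zeta l t.1).codRestrict (Wr Λ H) (zeta_mem_Wr l t)

theorem Wr_induction {p : Perm (S Λ H) → Prop} (one : p 1)
    (zeta_mul : ∀ (l : Λ) (h : H l) (g : Perm (S Λ H)), g ∈ Wr Λ H → p g → p (zeta l 1 h * g))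
    {g : Perm (S Λ H)} (hg : g ∈ Wr Λ H) : p g := by
  induction hg using Subgroup.closure_induction_left with
  | one => exact one
  | mul_left _ hx g hg ih =>
    obtain ⟨l, h, rfl⟩ := hx
    exact zeta_mul l h g hg ih
  | inv_mul_cancel _ hx g hg ih =>
    obtain ⟨l, h, rfl⟩ := hx
    rw [xi_eq_zeta, ← map_inv]
    exact zeta_mul l h⁻¹ g hg ih

def IsTriangular (g : Perm (S Λ H)) : Prop :=
  ∀ l (x y : S Λ H), AgreeAbove l x.1 y.1 → cocycle g l x = cocycle g l y

namespace IsTriangular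

variable {g g' : Perm (S Λ H)} {l : Λ} {x y : S Λ H}

theorem apply_eq (hg : IsTriangular g) (hl : x.1 l = y.1 l) (hxy : AgreeAbove l x.1 y.1) :
    (g x).1 l = (g y).1 l := by
  rw [apply_eq_cocycle_mul, apply_eq_cocycle_mul, hg l x y hxy, hl]

theorem agreeAbove (hg : IsTriangular g) (hxy : AgreeAbove l x.1 y.1) :
    AgreeAbove l (g x).1 (g y).1 :=
  fun m hm => hg.apply_eq (hxy m hm) (hxy.mono hm.le)

theorem mul (hg : IsTriangular g) (hg' : IsTriangular g') : IsTriangular (g * g') := by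
  intro l x y hxy
  rw [cocycle_mul, cocycle_mul, hg l _ _ (hg'.agreeAbove hxy), hg' l x y hxy]

end IsTriangular

theorem isTriangular_zeta (l : Λ) (t : ∀ m, H m) (h : H l) : IsTriangular (zeta l t h) := by
  intro m x y hxy
  rcases eq_or_ne m l with rfl | hml
  · simp only [cocycle_zeta_self, hxy.congr_left]
  · rw [cocycle_zeta_of_ne hml, cocycle_zeta_of_ne hml]

theorem isTriangular_of_mem_Wr {g : Perm (S Λ H)} (hg : g ∈ Wr Λ H) : IsTriangular g :=
  Wr_induction (fun _ _ _ _ => by simp [cocycle])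
    (fun l h _ _ ih => (isTriangular_zeta l 1 h).mul ih) hg

theorem agreeAbove_apply_iff {g : Perm (S Λ H)} (hg : g ∈ Wr Λ H) {l : Λ} {x y : S Λ H} :
    AgreeAbove l (g x).1 (g y).1 ↔ AgreeAbove l x.1 y.1 := by
  refine ⟨fun hxy => ?_, (isTriangular_of_mem_Wr hg).agreeAbove⟩
  simpa using (isTriangular_of_mem_Wr (inv_mem hg)).agreeAbove hxy

theorem exists_finset_forall_apply_eq {g : Perm (S Λ H)} (hg : g ∈ Wr Λ H) :
    ∃ F : Finset Λ, ∀ x : S Λ H, ∀ l ∉ F, (g x).1 l = x.1 l := by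
  refine Wr_induction (p := fun g => ∃ F : Finset Λ, ∀ x : S Λ H, ∀ l ∉ F, (g x).1 l = x.1 l)
    ⟨∅, fun _ _ _ => rfl⟩ (fun l h g _ ⟨F, hF⟩ => ⟨insert l F, ?_⟩) hg
  intro x m hm
  rw [Finset.mem_insert, not_or] at hm
  rw [Perm.mul_apply, zeta_apply_val, zetaFun_apply_of_ne hm.1, hF x m hm.2]

def SupportedAbove (l : Λ) (t : S Λ H) : Prop := ∀ m, ¬ l < m → t.1 m = 1

theorem SupportedAbove.eq_of_agreeAbove {l : Λ} {t t' : S Λ H} (ht : SupportedAbove l t)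
    (ht' : SupportedAbove l t') (htt' : AgreeAbove l t.1 t'.1) : t = t' := by
  refine Subtype.ext (funext fun m => ?_)
  by_cases hm : l < m
  · exact htt' m hm
  · rw [ht m hm, ht' m hm]

def truncAbove (l : Λ) (x : S Λ H) : S Λ H :=
  ⟨fun m => if l < m then x.1 m else 1,
    x.2.subset fun m hm => by by_cases h : l < m <;> simp_all [supp]⟩

theorem supportedAbove_truncAbove (l : Λ) (x : S Λ H) : SupportedAbove l (truncAbove l x) :=
  fun _ hm => if_neg hm

theorem agreeAbove_truncAbove (l : Λ) (x : S Λ H) : AgreeAbove l (truncAbove l x).1 x.1 :=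
  fun _ hm => if_pos hm

def cocycleSupport (g : Perm (S Λ H)) (l : Λ) : Set (S Λ H) :=
  {t | SupportedAbove l t ∧ cocycle g l t ≠ 1}

theorem cocycleSupport_zeta_mul_subset (g : Perm (S Λ H)) (l l' : Λ) (s : ∀ m, H m)
    (k : H l') : cocycleSupport (zeta l' s k * g) l ⊆
      cocycleSupport g l ∪ {t | SupportedAbove l t ∧ cocycle (zeta l' s k) l (g t) ≠ 1} := by
  rintro t ⟨ht, hne⟩
  rw [cocycle_mul] at hne
  by_cases hg : cocycle g l t = 1
  · exact Or.inr ⟨ht, by simpa [hg] using hne⟩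
  · exact Or.inl ⟨ht, hg⟩

theorem subsingleton_cocycle_zeta_ne_one {g : Perm (S Λ H)} (hg : g ∈ Wr Λ H) (l l' : Λ)
    (s : ∀ m, H m) (k : H l') :
    {t | SupportedAbove l t ∧ cocycle (zeta l' s k) l (g t) ≠ 1}.Subsingleton := by
  rintro t₁ ⟨ht₁, hne₁⟩ t₂ ⟨ht₂, hne₂⟩
  obtain rfl : l = l' := by_contra fun hl => hne₁ (cocycle_zeta_of_ne hl _)
  have hagree {t : S Λ H} (hne : cocycle (zeta l s k) l (g t) ≠ 1) : AgreeAbove l (g t).1 s :=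
    by_contra fun hc => hne (by rw [cocycle_zeta_self, if_neg hc])
  exact ht₁.eq_of_agreeAbove ht₂
    ((agreeAbove_apply_iff hg).1 ((hagree hne₁).trans (hagree hne₂).symm))

theorem cocycleSupport_finite {g : Perm (S Λ H)} (hg : g ∈ Wr Λ H) (l : Λ) :
    (cocycleSupport g l).Finite :=
  Wr_induction (p := fun g => (cocycleSupport g l).Finite)
    (Set.finite_empty.subset fun _ ht => ht.2 cocycle_one)
    (fun l' h g hg ih => (ih.union (subsingleton_cocycle_zeta_ne_one hg l l' 1 h).finite).subset
      (cocycleSupport_zeta_mul_subset g l l' 1 h)) hg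

theorem apply_eq_of_cocycleSupport_eq_empty {g : Perm (S Λ H)} (hg : g ∈ Wr Λ H) {a : Λ}
    (h : cocycleSupport g a = ∅) (x : S Λ H) : (g x).1 a = x.1 a := by
  rw [← cocycle_eq_one_iff, ← isTriangular_of_mem_Wr hg a _ _ (agreeAbove_truncAbove a x)]
  by_contra hne
  exact h.subset ⟨supportedAbove_truncAbove a x, hne⟩

theorem cocycleSupport_zeta_inv_mul_subset {g : Perm (S Λ H)} {a : Λ}
    (hga : ∀ x, AgreeAbove a (g x).1 x.1) {t : S Λ H} (ht : t ∈ cocycleSupport g a) :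
    cocycleSupport ((zeta a t.1 (cocycle g a t))⁻¹ * g) a ⊆ cocycleSupport g a \ {t} := by
  rintro s ⟨hs, hne⟩
  rw [← map_inv, cocycle_mul, cocycle_zeta_self] at hne
  by_cases hst : s = t
  · subst hst
    simp [hga s] at hne
  · have hagree : ¬ AgreeAbove a (g s).1 t.1 := fun h =>
      hst (hs.eq_of_agreeAbove ht.1 ((hga s).symm.trans h))
    rw [if_neg hagree, one_mul] at hne
    exact ⟨⟨hs, hne⟩, hst⟩

theorem mem_D {Γ : Set Λ} {g : Wr Λ H} :
    g ∈ D H Γ ↔ ∀ (x : S Λ H) (l : Λ), l ∉ Γ → ((g : Perm (S Λ H)) x).1 l = x.1 l :=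
  Iff.rfl

theorem D_mono {Γ Γ' : Set Λ} (h : Γ ⊆ Γ') : D H Γ ≤ D H Γ' :=
  fun _ hg x l hl => hg x l fun hlΓ => hl (h hlΓ)

theorem D_empty : D H (∅ : Set Λ) = ⊥ :=
  (Subgroup.eq_bot_iff_forall _).2 fun _ hg =>
    Subtype.ext (Equiv.ext fun x => Subtype.ext (funext fun l => hg x l (Set.notMem_empty l)))

theorem D_normal {Γ : Set Λ} (hΓ : IsLowerSet Γ) : (D H Γ).Normal := by
  refine ⟨fun d hd g x l hl => ?_⟩
  set y := (g : Perm (S Λ H))⁻¹ x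
  have hfix (m : Λ) (hm : l ≤ m) : ((d : Perm (S Λ H)) y).1 m = y.1 m :=
    hd y m fun hmΓ => hl (hΓ hm hmΓ)
  calc (((g * d * g⁻¹ : Wr Λ H) : Perm (S Λ H)) x).1 l
      = ((g : Perm (S Λ H)) ((d : Perm (S Λ H)) y)).1 l := rfl
    _ = ((g : Perm (S Λ H)) y).1 l :=
      (isTriangular_of_mem_Wr g.2).apply_eq (hfix l le_rfl) fun m hm => hfix m hm.le
    _ = x.1 l := by simp [y]

theorem zetaWr_mem_D (l : Λ) (t : S Λ H) (h : H l) : zetaWr l t h ∈ D H {l} :=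
  fun _ _ hm => zetaFun_apply_of_ne hm

theorem zetaWr_mem_D_Iic (l : Λ) (t : S Λ H) (h : H l) : zetaWr l t h ∈ D H (Set.Iic l) :=
  D_mono (by simp) (zetaWr_mem_D l t h)

theorem zetaWr_notMem_D {Γ : Set Λ} {l : Λ} (hl : l ∉ Γ) (t : S Λ H) {h : H l} (hh : h ≠ 1) :
    zetaWr l t h ∉ D H Γ := by
  intro hmem
  have := cocycle_eq_one_iff.2 (hmem t l hl)
  simp [zetaWr, cocycle_zeta_self, AgreeAbove.refl, hh] at this

-- Induction on the finite set `cocycleSupport g a`: dividing `g` by `ζ_{a,t}(cocycle g a t)`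
-- removes `t` from it.
theorem D_insert_le {K : Subgroup (Wr Λ H)} {a : Λ} {s : Set Λ} (hs : ∀ m ∈ s, m < a)
    (ha : ∀ t h, zetaWr a t h ∈ K) (hsK : D H s ≤ K) : D H (insert a s) ≤ K := by
  suffices ∀ (B : Finset (S Λ H)) (g : Wr Λ H), g ∈ D H (insert a s) →
      cocycleSupport (g : Perm (S Λ H)) a ⊆ ↑B → g ∈ K from
    fun g hg => this _ g hg (cocycleSupport_finite g.2 a).coe_toFinset.ge
  intro B
  induction B using Finset.induction_on with
  | empty =>
    intro g hg hB
    refine hsK fun x l hl => ?_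
    rcases eq_or_ne l a with rfl | hla
    · exact apply_eq_of_cocycleSupport_eq_empty g.2 (by simpa using hB) x
    · exact hg x l (by simp [hla, hl])
  | insert t B _ ih =>
    intro g hg hB
    have hB' {u : S Λ H} (hu : u ∈ cocycleSupport (g : Perm (S Λ H)) a) (hut : u ≠ t) :
        u ∈ B := by
      simpa [hut] using hB hu
    by_cases ht : t ∈ cocycleSupport g a
    · set ζ := zetaWr a t (cocycle g a t)
      have hga (x : S Λ H) : AgreeAbove a ((g : Perm (S Λ H)) x).1 x.1 := fun m hm =>
        hg x m (by simpa [hm.ne'] using fun hms => (hs m hms).asymm hm)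
      have hζ : ζ ∈ D H (insert a s) := D_mono (by simp) (zetaWr_mem_D a t _)
      have hrest : ζ⁻¹ * g ∈ K := by
        refine ih _ (mul_mem (inv_mem hζ) hg) fun u hu => ?_
        have hu' := cocycleSupport_zeta_inv_mul_subset hga ht hu
        exact hB' hu'.1 hu'.2
      simpa [ζ] using mul_mem (ha t (cocycle g a t)) hrest
    · exact ih g hg fun u hu => hB' hu fun hut => ht (hut ▸ hu)

theorem exists_mem_D_Ioi_agreeAbove (l : Λ) (x y : S Λ H) :
    ∃ g ∈ D H (Set.Ioi l), AgreeAbove l ((g : Perm (S Λ H)) x).1 y.1 := by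
  suffices ∀ (F : Finset Λ) (x : S Λ H), (∀ m, l < m → x.1 m ≠ y.1 m → m ∈ F) →
      ∃ g ∈ D H (Set.Ioi l), AgreeAbove l ((g : Perm (S Λ H)) x).1 y.1 from
    this (x.2.union y.2).toFinset x fun m _ hne => (x.2.union y.2).mem_toFinset.2 <|
      not_and_or.1 fun h => hne (h.1.trans h.2.symm)
  intro F
  induction F using Finset.induction_on with
  | empty =>
    exact fun x hx => ⟨1, one_mem _, fun m hm => by_contra fun hne => by simpa using hx m hm hne⟩
  | insert u F _ ih =>
    intro x hx
    by_cases hlu : l < u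
    · set ζ := zetaWr u x (y.1 u * (x.1 u)⁻¹)
      have hζu : ((ζ : Perm (S Λ H)) x).1 u = y.1 u := by
        change zetaFun u x.1 _ x.1 u = _
        rw [zetaFun_apply_self, if_pos (AgreeAbove.refl _ _), inv_mul_cancel_right]
      obtain ⟨g, hg, hgx⟩ := ih ((ζ : Perm (S Λ H)) x) fun m hm hne => by
        rcases eq_or_ne m u with rfl | hmu
        · exact absurd hζu hne
        · rw [show ((ζ : Perm (S Λ H)) x).1 m = x.1 m from zetaFun_apply_of_ne hmu] at hne
          exact (Finset.mem_insert.1 (hx m hm hne)).resolve_left hmu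
      exact ⟨g * ζ, mul_mem hg (D_mono (by simpa using hlu) (zetaWr_mem_D u x _)), hgx⟩
    · exact ih x fun m hm hne =>
        (Finset.mem_insert.1 (hx m hm hne)).resolve_left fun hmu => hlu (hmu ▸ hm)

theorem cocycle_conj_of_mem_D_Ioi {l : Λ} {g : Wr Λ H} (hg : g ∈ D H (Set.Ioi l))
    (p : Perm (S Λ H)) (x : S Λ H) :
    cocycle ((g : Perm (S Λ H)) * p * (g : Perm (S Λ H))⁻¹) l x =
      cocycle p l ((g : Perm (S Λ H))⁻¹ x) := by
  have hfix (g' : Wr Λ H) (hg' : g' ∈ D H (Set.Ioi l)) (y : S Λ H) : cocycle g' l y = 1 :=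
    cocycle_eq_one_iff.2 (hg' y l (lt_irrefl l))
  rw [cocycle_mul, cocycle_mul, hfix g hg, ← Subgroup.coe_inv, hfix _ (inv_mem hg), one_mul,
    mul_one]

theorem agreeAbove_apply_of_mem_D_Iic {l : Λ} {g : Wr Λ H} (hg : g ∈ D H (Set.Iic l))
    (x : S Λ H) : AgreeAbove l ((g : Perm (S Λ H)) x).1 x.1 :=
  fun m hm => hg x m hm.not_ge

-- A homomorphism because elements of `D_{≤ l}` fix the coordinates above `l`.
def levelCocycle (l : Λ) (x : S Λ H) : D H (Set.Iic l) →* H l where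
  toFun g := cocycle ((g : Wr Λ H) : Perm (S Λ H)) l x
  map_one' := cocycle_one
  map_mul' g g' := by
    rw [Subgroup.coe_mul, Subgroup.coe_mul, cocycle_mul,
      isTriangular_of_mem_Wr (g : Wr Λ H).2 l _ x (agreeAbove_apply_of_mem_D_Iic g'.2 x)]

@[simp]
theorem levelCocycle_apply (l : Λ) (x : S Λ H) (g : D H (Set.Iic l)) :
    levelCocycle l x g = cocycle ((g : Wr Λ H) : Perm (S Λ H)) l x := rfl

theorem levelCocycle_zetaWr (l : Λ) (x t : S Λ H) (h : H l) :
    levelCocycle l x ⟨zetaWr l t h, zetaWr_mem_D_Iic l t h⟩ =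
      if AgreeAbove l x.1 t.1 then h else 1 :=
  cocycle_zeta_self x

theorem levelCocycle_surjective (l : Λ) (x : S Λ H) : Function.Surjective (levelCocycle l x) :=
  fun h => ⟨_, by rw [levelCocycle_zetaWr, if_pos (AgreeAbove.refl _ _)]⟩

def slab (l : Λ) (t : S Λ H) : Set (S Λ H) := {z | z.1 l = t.1 l ∧ AgreeAbove l z.1 t.1}

theorem IsTriangular.mapsTo_slab {g : Perm (S Λ H)} (hg : IsTriangular g) (l : Λ)
    (t : S Λ H) : Set.MapsTo g (slab l t) (slab l (g t)) :=
  fun _ hz => ⟨hg.apply_eq hz.1 hz.2, hg.agreeAbove hz.2⟩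

theorem disjoint_slab {l : Λ} {x y : S Λ H} (hxy : x.1 l ≠ y.1 l) :
    Disjoint (slab l x) (slab l y) :=
  Set.disjoint_left.2 fun _ hx hy => hxy (hx.1.symm.trans hy.1)

theorem isSupportedIn_zeta_slab {l l₀ : Λ} (hl : l < l₀) (t : S Λ H) (h : H l) :
    IsSupportedIn (zeta l t.1 h) (slab l₀ t) :=
  fun _ hz => Subtype.ext (zetaFun_of_not_agreeAbove fun hzt => hz ⟨hzt l₀ hl, hzt.mono hl.le⟩)

end PartialOrder

section LinearOrder

variable [LinearOrder Λ]

theorem D_le_of_forall_zetaWr_mem {K : Subgroup (Wr Λ H)} {U : Set Λ}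
    (hK : ∀ l ∈ U, ∀ t h, zetaWr l t h ∈ K) : D H U ≤ K := by
  suffices ∀ F : Finset Λ, D H (↑F ∩ U) ≤ K by
    intro g hg
    obtain ⟨F, hF⟩ := exists_finset_forall_apply_eq g.2
    exact this F fun x l hl => by
      by_cases hlF : l ∈ F
      · exact hg x l fun hlU => hl ⟨hlF, hlU⟩
      · exact hF x l hlF
  intro F
  induction F using Finset.induction_on_max with
  | empty => simp [D_empty]
  | insert a s hs ih =>
    by_cases ha : a ∈ U
    · rw [Finset.coe_insert, Set.insert_inter_of_mem ha]
      exact D_insert_le (fun m hm => hs m hm.1) (hK a ha) ih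
    · rwa [Finset.coe_insert, Set.insert_inter_of_notMem ha]

theorem mem_D_Iio_of_levelCocycle_eq_one {l₀ : Λ} {g : D H (Set.Iic l₀)}
    (hg : ∀ x, levelCocycle l₀ x g = 1) : (g : Wr Λ H) ∈ D H (Set.Iio l₀) := by
  intro x l hl
  rcases (not_lt.1 hl).lt_or_eq with hl | rfl
  · exact g.2 x l hl.not_ge
  · exact cocycle_eq_one_iff.1 (hg x)

theorem exists_le_D_Iic_and_not_le_D_Iio [WellFoundedGT Λ] {N : Subgroup (Wr Λ H)}
    (hN : N ≠ ⊥) : ∃ l₀, N ≤ D H (Set.Iic l₀) ∧ ¬ N ≤ D H (Set.Iio l₀) := by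
  set M := {l : Λ | ∃ p ∈ N, ∃ x : S Λ H, ((p : Perm (S Λ H)) x).1 l ≠ x.1 l}
  have hM : M.Nonempty := by
    refine Set.nonempty_iff_ne_empty.2 fun hM => hN (le_bot_iff.1 ?_)
    rw [← D_empty]
    exact fun p hp x l _ => by_contra fun hne => (hM ▸ ⟨p, hp, x, hne⟩ : l ∈ (∅ : Set Λ))
  obtain ⟨l₀, hl₀, hmax⟩ := wellFounded_gt.has_min M hM
  refine ⟨l₀, fun p hp x l hl => by_contra fun hne => hmax l ⟨p, hp, x, hne⟩ (not_le.1 hl), ?_⟩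
  obtain ⟨p, hp, x, hne⟩ := hl₀
  exact fun hle => hne (hle hp x l₀ (lt_irrefl l₀))

section Classification

variable {N : Subgroup (Wr Λ H)} {l₀ : Λ}

theorem exists_mem_cocycle_ne_one (hN : N.Normal) (hle : N ≤ D H (Set.Iic l₀))
    (hnot : ¬ N ≤ D H (Set.Iio l₀)) (x : S Λ H) :
    ∃ p ∈ N, cocycle (p : Perm (S Λ H)) l₀ x ≠ 1 := by
  obtain ⟨p, hp, hpD⟩ := SetLike.not_le_iff_exists.1 hnot
  obtain ⟨x₀, l, hl, hmoved⟩ : ∃ x₀ l, l ∉ Set.Iio l₀ ∧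
      ((p : Perm (S Λ H)) x₀).1 l ≠ x₀.1 l := by
    simpa [mem_D] using hpD
  obtain rfl : l = l₀ :=
    le_antisymm (not_lt.1 fun h => hmoved (hle hp x₀ l h.not_ge)) (not_lt.1 hl)
  obtain ⟨g, hg, hgx⟩ := exists_mem_D_Ioi_agreeAbove l x₀ x
  refine ⟨g * p * g⁻¹, hN.conj_mem p hp g, ?_⟩
  have hx₀ : AgreeAbove l ((g : Perm (S Λ H))⁻¹ x).1 x₀.1 := by
    simpa using (agreeAbove_apply_iff (inv_mem g.2)).2 hgx.symm
  rw [Subgroup.coe_mul, Subgroup.coe_mul, Subgroup.coe_inv, cocycle_conj_of_mem_D_Ioi hg,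
    isTriangular_of_mem_Wr p.2 l _ _ hx₀, Ne, cocycle_eq_one_iff]
  exact hmoved

theorem exists_mem_cocycle_eq [IsSimpleGroup (H l₀)] (hN : N.Normal)
    (hle : N ≤ D H (Set.Iic l₀)) (hnot : ¬ N ≤ D H (Set.Iio l₀)) (x : S Λ H) (σ : H l₀) :
    ∃ p ∈ N, cocycle (p : Perm (S Λ H)) l₀ x = σ := by
  set A := (N.subgroupOf (D H (Set.Iic l₀))).map (levelCocycle l₀ x)
  have hA : A = ⊤ := by
    refine ((hN.subgroupOf _).map _ (levelCocycle_surjective l₀ x)).eq_bot_or_eq_top.resolve_left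
      fun hbot => ?_
    obtain ⟨p, hp, hne⟩ := exists_mem_cocycle_ne_one hN hle hnot x
    have hmem : levelCocycle l₀ x ⟨p, hle hp⟩ ∈ A :=
      Subgroup.mem_map_of_mem _ (Subgroup.mem_subgroupOf.2 hp)
    exact hne (Subgroup.mem_bot.1 (hbot ▸ hmem))
  obtain ⟨p, hp, hpσ⟩ := Subgroup.mem_map.1 (hA ▸ Subgroup.mem_top σ)
  exact ⟨p, Subgroup.mem_subgroupOf.1 hp, hpσ⟩

-- `u = p q⁻¹ p⁻¹` and `v = p' r⁻¹ p'⁻¹` are supported on slabs disjoint from each other and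
-- from the slab of `t`, so `⁅q, r⁆ = ⁅q u, r v⁆`, and `r v = ⁅r, p'⁆ ∈ N`.
theorem commutatorElement_mem_of_isSupportedIn_slab (hN : N.Normal) {t : S Λ H}
    (hsurj : ∀ σ : H l₀, ∃ p ∈ N, cocycle (p : Perm (S Λ H)) l₀ t = σ) {a b : H l₀}
    (hab : ¬ Commute a b) {q r : Wr Λ H} (hq : IsSupportedIn (q : Perm (S Λ H)) (slab l₀ t))
    (hr : IsSupportedIn (r : Perm (S Λ H)) (slab l₀ t)) : ⁅q, r⁆ ∈ N := by
  have hconj (p : Wr Λ H) {g : Wr Λ H} (hg : IsSupportedIn (g : Perm (S Λ H)) (slab l₀ t)) :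
      IsSupportedIn ((p * g⁻¹ * p⁻¹ : Wr Λ H) : Perm (S Λ H))
        (slab l₀ ((p : Perm (S Λ H)) t)) :=
    hg.inv.conj ((isTriangular_of_mem_Wr p.2).mapsTo_slab l₀ t)
  have hdisj (p p' : Wr Λ H) (hpp' : cocycle (p : Perm (S Λ H)) l₀ t ≠ cocycle p' l₀ t) :
      Disjoint (slab l₀ ((p : Perm (S Λ H)) t)) (slab l₀ ((p' : Perm (S Λ H)) t)) :=
    disjoint_slab fun h => hpp' (mul_right_cancel (by
      rwa [apply_eq_cocycle_mul, apply_eq_cocycle_mul] at h))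
  have hcommute {g g' : Wr Λ H} (h : Commute (g : Perm (S Λ H)) g') : Commute g g' :=
    Subtype.ext h.eq
  obtain ⟨p, -, hpa⟩ := hsurj a
  obtain ⟨p', hp', hp'b⟩ := hsurj b
  have ha : cocycle (p : Perm (S Λ H)) l₀ t ≠ cocycle ((1 : Wr Λ H) : Perm (S Λ H)) l₀ t := by
    rw [hpa, Subgroup.coe_one, cocycle_one]
    exact fun h => hab (h ▸ Commute.one_left b)
  have hb : cocycle (p' : Perm (S Λ H)) l₀ t ≠ cocycle ((1 : Wr Λ H) : Perm (S Λ H)) l₀ t := by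
    rw [hp'b, Subgroup.coe_one, cocycle_one]
    exact fun h => hab (h ▸ Commute.one_right a)
  have hab' : cocycle (p : Perm (S Λ H)) l₀ t ≠ cocycle (p' : Perm (S Λ H)) l₀ t := by
    rw [hpa, hp'b]
    exact fun h => hab (h ▸ Commute.refl a)
  rw [← commutatorElement_mul_mul_of_commute
    (hcommute ((hconj p hq).commute hr (by simpa using hdisj p 1 ha)))
    (hcommute ((hconj p hq).commute (hconj p' hr) (hdisj p p' hab')))
    (hcommute ((hconj p' hr).commute hq (by simpa using hdisj p' 1 hb)))]
  refine commutatorElement_mem_right hN _ ?_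
  simpa only [commutatorElement_def, mul_assoc] using commutatorElement_mem_right hN r hp'

theorem zetaWr_mem_of_lt (hN : N.Normal) {t : S Λ H}
    (hsurj : ∀ σ : H l₀, ∃ p ∈ N, cocycle (p : Perm (S Λ H)) l₀ t = σ) {a b : H l₀}
    (hab : ¬ Commute a b) {l : Λ} [Group.IsPerfect (H l)] (hl : l < l₀) (h : H l) :
    zetaWr l t h ∈ N := by
  have : commutator (H l) ≤ N.comap (zetaWr l t) := Subgroup.commutator_le.2 fun c _ d _ => by
    rw [Subgroup.mem_comap, map_commutatorElement]
    exact commutatorElement_mem_of_isSupportedIn_slab hN hsurj hab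
      (isSupportedIn_zeta_slab hl t c) (isSupportedIn_zeta_slab hl t d)
  exact this Group.IsPerfect.mem_commutator

theorem D_Iio_le [∀ l, Group.IsPerfect (H l)] (hN : N.Normal)
    (hsurj : ∀ t (σ : H l₀), ∃ p ∈ N, cocycle (p : Perm (S Λ H)) l₀ t = σ) {a b : H l₀}
    (hab : ¬ Commute a b) : D H (Set.Iio l₀) ≤ N :=
  D_le_of_forall_zetaWr_mem fun _ hl t h => zetaWr_mem_of_lt hN (hsurj t) hab hl h

theorem zetaWr_commutatorElement_mem (hN : N.Normal) (hle : N ≤ D H (Set.Iic l₀))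
    (hlow : D H (Set.Iio l₀) ≤ N) {t : S Λ H}
    (hsurj : ∀ σ : H l₀, ∃ p ∈ N, cocycle (p : Perm (S Λ H)) l₀ t = σ) (a b : H l₀) :
    zetaWr l₀ t ⁅a, b⁆ ∈ N := by
  obtain ⟨p, hp, hpa⟩ := hsurj a
  let P : D H (Set.Iic l₀) := ⟨p, hle hp⟩
  let Z (c : H l₀) : D H (Set.Iic l₀) := ⟨zetaWr l₀ t c, zetaWr_mem_D_Iic l₀ t c⟩
  have hZ (x : S Λ H) (c : H l₀) :
      levelCocycle l₀ x (Z c) = if AgreeAbove l₀ x.1 t.1 then c else 1 :=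
    levelCocycle_zetaWr l₀ x t c
  -- At level `l₀`, both `⁅p, ζ_{l₀,t}(b)⁆` and `ζ_{l₀,t}(⁅a, b⁆)` multiply by `⁅a, b⁆` on the
  -- configurations agreeing with `t` above `l₀`, and by `1` elsewhere.
  have hrest : (((Z ⁅a, b⁆)⁻¹ * ⁅P, Z b⁆ : D H (Set.Iic l₀)) : Wr Λ H) ∈ D H (Set.Iio l₀) := by
    refine mem_D_Iio_of_levelCocycle_eq_one fun x => ?_
    simp only [map_mul, map_inv, map_commutatorElement, hZ]
    by_cases hx : AgreeAbove l₀ x.1 t.1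
    · rw [if_pos hx, if_pos hx, levelCocycle_apply, isTriangular_of_mem_Wr p.2 l₀ x t hx, hpa,
        inv_mul_cancel]
    · simp [hx]
  have hc : (((Z ⁅a, b⁆)⁻¹ * ⁅P, Z b⁆ : D H (Set.Iic l₀)) : Wr Λ H) =
      (zetaWr l₀ t ⁅a, b⁆)⁻¹ * ⁅p, zetaWr l₀ t b⁆ := rfl
  rw [hc] at hrest
  simpa only [mul_inv_rev, inv_inv, mul_inv_cancel_left] using
    N.mul_mem (commutatorElement_mem_left hN hp (zetaWr l₀ t b)) (N.inv_mem (hlow hrest))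

theorem zetaWr_top_mem [IsSimpleGroup (H l₀)] (hN : N.Normal) (hle : N ≤ D H (Set.Iic l₀))
    (hlow : D H (Set.Iio l₀) ≤ N) {t : S Λ H}
    (hsurj : ∀ σ : H l₀, ∃ p ∈ N, cocycle (p : Perm (S Λ H)) l₀ t = σ) {a b : H l₀}
    (hab : ¬ Commute a b) (h : H l₀) : zetaWr l₀ t h ∈ N := by
  have hK : N.comap (zetaWr l₀ t) = ⊤ := by
    refine (hN.comap _).eq_bot_or_eq_top.resolve_left fun hbot => hab ?_
    rw [← commutatorElement_eq_one_iff_commute, ← Subgroup.mem_bot, ← hbot]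
    exact zetaWr_commutatorElement_mem hN hle hlow hsurj a b
  exact Subgroup.mem_comap.1 (hK ▸ Subgroup.mem_top h)

theorem eq_D_Iic_of_le_of_not_le [∀ l, IsSimpleGroup (H l)] [∀ l, Group.IsPerfect (H l)]
    (hN : N.Normal) (hle : N ≤ D H (Set.Iic l₀)) (hnot : ¬ N ≤ D H (Set.Iio l₀)) :
    N = D H (Set.Iic l₀) := by
  have hsurj := exists_mem_cocycle_eq hN hle hnot
  obtain ⟨a, b, hab⟩ := exists_not_commute (H l₀)
  have hlow := D_Iio_le hN hsurj hab
  refine le_antisymm hle (D_le_of_forall_zetaWr_mem fun l hl t h => ?_)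
  rcases (Set.mem_Iic.1 hl).lt_or_eq with hl | rfl
  · exact hlow (D_mono (by simpa using hl) (zetaWr_mem_D l t h))
  · exact zetaWr_top_mem hN hle hlow (hsurj t) hab h

end Classification

theorem exists_mem_D_Iic_notMem_D [∀ l, Nontrivial (H l)] {Γ : Set Λ} {w : Λ}
    (hw : w ∉ Γ) : ∃ g ∈ D H (Set.Iic w), g ∉ D H Γ := by
  obtain ⟨h, hh⟩ := exists_ne (1 : H w)
  let one : S Λ H := ⟨1, Set.finite_empty.subset fun _ hl => hl rfl⟩
  exact ⟨_, zetaWr_mem_D_Iic w one h, zetaWr_notMem_D hw one hh⟩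

theorem D_Iic_ne_bot [∀ l, Nontrivial (H l)] (w : Λ) : D H (Set.Iic w) ≠ ⊥ := by
  obtain ⟨g, hg, hgD⟩ := exists_mem_D_Iic_notMem_D (H := H) (Set.notMem_empty w)
  rw [D_empty] at hgD
  exact fun hbot => hgD (hbot ▸ hg)

theorem D_Iic_le_D_Iic_iff [∀ l, Nontrivial (H l)] {w w' : Λ} :
    D H (Set.Iic w) ≤ D H (Set.Iic w') ↔ w ≤ w' := by
  refine ⟨fun hle => not_lt.1 fun hlt => ?_, fun hle => D_mono (Set.Iic_subset_Iic.2 hle)⟩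
  obtain ⟨g, hg, hgD⟩ := exists_mem_D_Iic_notMem_D (H := H) (Γ := Set.Iic w') hlt.not_ge
  exact hgD (hle hg)

theorem nonempty_orderIso_normal_ne_bot [WellFoundedGT Λ] [∀ l, IsSimpleGroup (H l)]
    [∀ l, Group.IsPerfect (H l)] :
    Nonempty ({N : Subgroup (Wr Λ H) // N.Normal ∧ N ≠ ⊥} ≃o Λ) := by
  let f : Λ ↪o {N : Subgroup (Wr Λ H) // N.Normal ∧ N ≠ ⊥} :=
    OrderEmbedding.ofMapLEIff
      (fun w => ⟨D H (Set.Iic w), D_normal (isLowerSet_Iic w), D_Iic_ne_bot w⟩)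
      fun _ _ => D_Iic_le_D_Iic_iff
  refine ⟨(OrderIso.ofSurjective f fun ⟨N, hN, hN1⟩ => ?_).symm⟩
  obtain ⟨l₀, hle, hnot⟩ := exists_le_D_Iic_and_not_le_D_Iio hN1
  exact ⟨l₀, Subtype.ext (eq_D_Iic_of_le_of_not_le hN hle hnot).symm⟩

end LinearOrder

end GW

end

/-- for a well-order `W` and `G_W = Wr_{λ∈W^op} A₅`, the set of nontrivial
normal subgroups of `G_W` (including `G_W` itself), ordered by inclusion, is
order-isomorphic to `W^op`. -/
theorem nontrivial_normal_subgroups_orderIso (W : Type*) [LinearOrder W] [WellFoundedLT W] :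
    Nonempty
      ({N : Subgroup ↥(GW.Wr Wᵒᵈ (fun _ : Wᵒᵈ => ↥(alternatingGroup (Fin 5)))) //
          N.Normal ∧ N ≠ ⊥} ≃o Wᵒᵈ) := by
  have h5 : 5 ≤ Nat.card (Fin 5) := by simp
  have : IsSimpleGroup (alternatingGroup (Fin 5)) := alternatingGroup.isSimpleGroup h5
  have : Group.IsPerfect (alternatingGroup (Fin 5)) := ⟨commutator_alternatingGroup_eq_top h5⟩
  exact GW.nonempty_orderIso_normal_ne_bot
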